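/- Consider on the open set {u > 0} ⊂ R^2 with coordinates (u, v) the Sinh-Gordon system u^i_t = V^i_j u^j_x + W^i with V^2_2 = 1 and all other V^i_j = 0 (in particular V^1_j = 0), W^1 = (1/2) u v, W^2 = (1/2)(u^2 − 1/u^2), and the operator with g = diag(0,1), b^{ij}_k = 0, ω^{12} = u/2 = −ω^{21}, ω^{11} = ω^{22} = 0. Then all five compatibility conditions of the degenerate Theorem hold, in particular T^{ij}_k = 0 where T^{ij}_k = −g^{il} W^j_{,lk} + b^{ij}_{k,l} W^l + b^{ij}_l W^l_{,k} − b^{il}_k W^j_{,l} − b^{lj}_k W^i_{,l} − V^i_{k,s} ω^{sj} + ω^{is}(V^j_{s,k} − V^j_{k,s}) + ω^{ij}_{,s} V^s_k − ω^{sj}_{,k} V^i_s. -/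

import Mathlib

open scoped BigOperators

set_option linter.unusedVariables false

noncomputable def pd {n : ℕ} (s : Fin n) (f : (Fin n → ℝ) → ℝ) (u : Fin n → ℝ) : ℝ :=
  fderiv ℝ f u (Pi.single s 1)

/-- Sinh-Gordon system: homogeneous part, `V^2_2 = 1`, other entries zero. -/
noncomputable def VSG (u : Fin 2 → ℝ) : Fin 2 → Fin 2 → ℝ :=
  fun i j => !![0, 0; 0, 1] i j

/-- Non-homogeneous part `W = ((1/2) u v, (1/2)(u² − 1/u²))`. -/
noncomputable def WSG (u : Fin 2 → ℝ) : Fin 2 → ℝ :=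
  ![(1/2) * u 0 * u 1, (1/2) * ((u 0)^2 - 1/(u 0)^2)]

/-- Degenerate leading coefficient `g = diag(0,1)`. -/
noncomputable def gSG (u : Fin 2 → ℝ) : Fin 2 → Fin 2 → ℝ :=
  fun i j => !![0, 0; 0, 1] i j

noncomputable def bSG (u : Fin 2 → ℝ) : Fin 2 → Fin 2 → Fin 2 → ℝ :=
  fun _ _ _ => 0

/-- Zeroth-order part: `ω^{12} = u/2 = −ω^{21}`. -/
noncomputable def ωSG (u : Fin 2 → ℝ) : Fin 2 → Fin 2 → ℝ :=
  fun i j => !![0, u 0 / 2; -(u 0 / 2), 0] i j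

noncomputable def prj (i : Fin 2) : (Fin 2 → ℝ) →L[ℝ] ℝ :=
  ContinuousLinearMap.proj (R := ℝ) (φ := fun _ : Fin 2 => ℝ) i

lemma prj_hasFDerivAt (i : Fin 2) (u : Fin 2 → ℝ) :
    HasFDerivAt (fun v : Fin 2 → ℝ => v i) (prj i) u := (prj i).hasFDerivAt

lemma pd_const {n : ℕ} (c : ℝ) (s : Fin n) (u : Fin n → ℝ) : pd s (fun _ => c) u = 0 := by
  simp [pd]

lemma hasW0 (u : Fin 2 → ℝ) :
    HasFDerivAt (fun v : Fin 2 → ℝ => 1/2 * v 0 * v 1)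
      ((1/2 * u 0) • prj 1 + u 1 • ((1/2 : ℝ) • prj 0)) u :=
  ((prj_hasFDerivAt 0 u).const_mul (1/2)).mul (prj_hasFDerivAt 1 u)

lemma pd_W0 (s : Fin 2) (u : Fin 2 → ℝ) :
    pd s (fun v => 1/2 * v 0 * v 1) u
      = 1/2 * u 0 * (Pi.single s (1:ℝ) : Fin 2 → ℝ) 1
        + 1/2 * u 1 * (Pi.single s (1:ℝ) : Fin 2 → ℝ) 0 := by
  rw [pd, (hasW0 u).fderiv]
  simp [prj, ContinuousLinearMap.proj_apply]
  ring


lemma hasW1 (u : Fin 2 → ℝ) (hu : u 0 ≠ 0) :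
    HasFDerivAt (fun v : Fin 2 → ℝ => 1/2 * ((v 0)^2 - 1/(v 0)^2))
      ((u 0 + 1/(u 0)^3) • prj 0) u := by
  have h1 : HasDerivAt (fun t : ℝ => t ^ 2) (2 * u 0 ^ 1) (u 0) := by
    simpa using hasDerivAt_pow 2 (u 0)
  have h2 := h1.inv (pow_ne_zero 2 hu)
  have h3 := (h1.sub h2).const_mul (1/2 : ℝ)
  have hD : 1/2 * (2 * u 0 ^ 1 - -(2 * u 0 ^ 1) / (u 0 ^ 2) ^ 2) = u 0 + 1/(u 0)^3 := by
    field_simp; ring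
  rw [hD] at h3
  have := h3.comp_hasFDerivAt u (prj_hasFDerivAt 0 u)
  have he : ((fun t : ℝ => 1/2 * (t ^ 2 - (t ^ 2)⁻¹)) ∘ fun v : Fin 2 → ℝ => v 0)
      = fun v : Fin 2 → ℝ => 1/2 * ((v 0)^2 - 1/(v 0)^2) := by
    funext v; simp [Function.comp, one_div]
  exact this.congr_of_eventuallyEq (Filter.Eventually.of_forall fun v => by simp [Function.comp, one_div])

lemma pd_W1 (s : Fin 2) (u : Fin 2 → ℝ) (hu : u 0 ≠ 0) :
    pd s (fun v => 1/2 * ((v 0)^2 - 1/(v 0)^2)) u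
      = (u 0 + 1/(u 0)^3) * (Pi.single s (1:ℝ) : Fin 2 → ℝ) 0 := by
  rw [pd, (hasW1 u hu).fderiv]
  simp [prj]

lemma pd_half (s : Fin 2) (u : Fin 2 → ℝ) :
    pd s (fun v => v 0 / 2) u = (Pi.single s (1:ℝ) : Fin 2 → ℝ) 0 / 2 := by
  have h : HasFDerivAt (fun v : Fin 2 → ℝ => v 0 / 2) ((2:ℝ)⁻¹ • prj 0) u := by
    have := (prj_hasFDerivAt 0 u).const_mul (2:ℝ)⁻¹
    have he : (fun v : Fin 2 → ℝ => (2:ℝ)⁻¹ * v 0) = fun v : Fin 2 → ℝ => v 0 / 2 := by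
      funext v; ring
    rwa [he] at this
  rw [pd, h.fderiv]
  simp [prj]; ring

lemma pd_neg_half (s : Fin 2) (u : Fin 2 → ℝ) :
    pd s (fun v => -(v 0 / 2)) u = -((Pi.single s (1:ℝ) : Fin 2 → ℝ) 0 / 2) := by
  have h : HasFDerivAt (fun v : Fin 2 → ℝ => v 0 / 2) ((2:ℝ)⁻¹ • prj 0) u := by
    have := (prj_hasFDerivAt 0 u).const_mul (2:ℝ)⁻¹
    have he : (fun v : Fin 2 → ℝ => (2:ℝ)⁻¹ * v 0) = fun v : Fin 2 → ℝ => v 0 / 2 := by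
      funext v; ring
    rwa [he] at this
  rw [pd, (show HasFDerivAt (fun v : Fin 2 → ℝ => -(v 0 / 2)) (-((2:ℝ)⁻¹ • prj 0)) u from h.neg).fderiv]
  simp [prj]; ring

lemma pd_pd_W0 (k : Fin 2) (u : Fin 2 → ℝ) :
    pd k (fun v => pd 1 (fun w => 1/2 * w 0 * w 1) v) u
      = 1/2 * (Pi.single k (1:ℝ) : Fin 2 → ℝ) 0 := by
  have he : (fun v : Fin 2 → ℝ => pd 1 (fun w => 1/2 * w 0 * w 1) v)
      = fun v : Fin 2 → ℝ => 1/2 * v 0 := by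
    funext v; rw [pd_W0]; simp
  rw [he, pd, ((prj_hasFDerivAt 0 u).const_mul (1/2)).fderiv]
  simp [prj]

lemma pd_pd_W1 (k : Fin 2) (u : Fin 2 → ℝ) (hu : 0 < u 0) :
    pd k (fun v => pd 1 (fun w => 1/2 * ((w 0)^2 - 1/(w 0)^2)) v) u = 0 := by
  have hev : (fun v : Fin 2 → ℝ => pd 1 (fun w => 1/2 * ((w 0)^2 - 1/(w 0)^2)) v)
      =ᶠ[nhds u] (fun _ => (0:ℝ)) := by
    have hne : ∀ᶠ v in nhds u, v 0 ≠ 0 :=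
      (continuous_apply (0 : Fin 2)).continuousAt.eventually_ne (ne_of_gt hu)
    filter_upwards [hne] with v hv
    rw [pd_W1 _ _ hv]
    simp
  rw [pd, hev.fderiv_eq]
  simp

lemma sing00 : (Pi.single (0:Fin 2) (1:ℝ) : Fin 2 → ℝ) 0 = 1 := Pi.single_eq_same 0 1
lemma sing11 : (Pi.single (1:Fin 2) (1:ℝ) : Fin 2 → ℝ) 1 = 1 := Pi.single_eq_same 1 1
lemma sing01 : (Pi.single (0:Fin 2) (1:ℝ) : Fin 2 → ℝ) 1 = 0 := Pi.single_eq_of_ne (by decide) 1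
lemma sing10 : (Pi.single (1:Fin 2) (1:ℝ) : Fin 2 → ℝ) 0 = 0 := Pi.single_eq_of_ne (by decide) 1

/-- The Sinh-Gordon system is compatible (on `{u > 0}`) with the degenerate
non-homogeneous hydrodynamic operator: all five compatibility conditions hold. -/
theorem sinhGordon_compatibility :
    -- (1)
    (∀ u : Fin 2 → ℝ, u 0 > 0 → ∀ i j : Fin 2,
      ∑ s, VSG u i s * gSG u s j = ∑ s, VSG u j s * gSG u s i)
    ∧
    -- (2)
    (∀ u : Fin 2 → ℝ, u 0 > 0 → ∀ i j k : Fin 2,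
      ∑ s, (gSG u i s * (pd k (fun v => VSG v j s) u - pd s (fun v => VSG v j k) u)
          + bSG u i j s * VSG u s k - bSG u s j k * VSG u i s) = 0)
    ∧
    -- (3)
    (∀ u : Fin 2 → ℝ, u 0 > 0 → ∀ i j : Fin 2,
      ∑ s, (pd s (fun v => gSG v i j) u * WSG u s
          - gSG u j s * pd s (fun v => WSG v i) u
          - gSG u i s * pd s (fun v => WSG v j) u
          - ωSG u s i * VSG u j s - ωSG u s j * VSG u i s) = 0)
    ∧
    -- (4)
    (∀ u : Fin 2 → ℝ, u 0 > 0 → ∀ i j : Fin 2,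
      ∑ s, (pd s (fun v => WSG v i) u * ωSG u s j
          + pd s (fun v => WSG v j) u * ωSG u i s
          + pd s (fun v => ωSG v j i) u * WSG u s) = 0)
    ∧
    -- (5) T^{ij}_k = 0
    (∀ u : Fin 2 → ℝ, u 0 > 0 → ∀ i j k : Fin 2,
      (- ∑ l, gSG u i l * pd k (fun v => pd l (fun w => WSG w j) v) u)
      + (∑ l, pd l (fun v => bSG v i j k) u * WSG u l)
      + (∑ l, bSG u i j l * pd k (fun v => WSG v l) u)
      - (∑ l, bSG u i l k * pd l (fun v => WSG v j) u)
      - (∑ l, bSG u l j k * pd l (fun v => WSG v i) u)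
      - (∑ s, pd s (fun v => VSG v i k) u * ωSG u s j)
      + (∑ s, ωSG u i s * (pd k (fun v => VSG v j s) u - pd s (fun v => VSG v j k) u))
      + (∑ s, pd s (fun v => ωSG v i j) u * VSG u s k)
      - (∑ s, pd k (fun v => ωSG v s j) u * VSG u i s) = 0) := by
  
  refine ⟨?_, ?_, ?_, ?_, ?_⟩
  · intro u hu i j
    fin_cases i <;> fin_cases j <;> simp [VSG, gSG, Fin.sum_univ_two]
  · intro u hu i j k
    fin_cases i <;> fin_cases j <;> fin_cases k <;>
      simp [VSG, gSG, bSG, Fin.sum_univ_two, pd_const]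
  · intro u hu i j
    have hu' := ne_of_gt hu
    fin_cases i <;> fin_cases j <;>
      simp only [VSG, gSG, ωSG, WSG, Fin.sum_univ_two, Fin.isValue, Fin.mk_zero, Fin.mk_one,
        Matrix.cons_val', Matrix.cons_val_zero, Matrix.cons_val_one, Matrix.head_cons,
        Matrix.empty_val', Matrix.cons_val_fin_one, Matrix.head_fin_const, Matrix.of_apply,
        pd_const, pd_W0, pd_W1 _ _ hu', sing00, sing01, sing10, sing11] <;>
      ring
  · intro u hu i j
    have hu' := ne_of_gt hu
    fin_cases i <;> fin_cases j <;>
      simp only [VSG, gSG, ωSG, WSG, Fin.sum_univ_two, Fin.isValue, Fin.mk_zero, Fin.mk_one,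
        Matrix.cons_val', Matrix.cons_val_zero, Matrix.cons_val_one, Matrix.head_cons,
        Matrix.empty_val', Matrix.cons_val_fin_one, Matrix.head_fin_const, Matrix.of_apply,
        pd_const, pd_W0, pd_W1 _ _ hu', pd_half, pd_neg_half,
        sing00, sing01, sing10, sing11] <;>
      field_simp <;> ring
  · intro u hu i j k
    have hu' := ne_of_gt hu
    fin_cases i <;> fin_cases j <;> fin_cases k <;>
      simp only [VSG, gSG, bSG, ωSG, WSG, Fin.sum_univ_two, Fin.isValue, Fin.mk_zero, Fin.mk_one,
        Matrix.cons_val', Matrix.cons_val_zero, Matrix.cons_val_one, Matrix.head_cons,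
        Matrix.empty_val', Matrix.cons_val_fin_one, Matrix.head_fin_const, Matrix.of_apply] <;>
      simp only [pd_pd_W0, pd_pd_W1 _ _ hu] <;>
      simp only [pd_const, pd_W0, pd_W1 _ _ hu', pd_half, pd_neg_half,
        sing00, sing01, sing10, sing11] <;>
      field_simp <;> ring
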